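/- Let m, n ≥ 0, let λ ∈ Λ_{n+1} with λ ⊂ m^{n+1}, let μ ∈ Λ_n with μ ⊂ m^n, and let r be an integer with 0 ≤ r ≤ m. Set d = #{1 ≤ j ≤ m : λ′_j = μ′_j + 1}. Then (n^m − μ′) ∼_r ((n+1)^m − λ′) holds in Λ_m if and only if both (n^m − μ′) ∼_m ((n+1)^m − λ′) holds and r ≥ m − d. -/

import Mathlib

open Finset

/-- `l` is a partition with at most `N` parts: `l 1 ≥ l 2 ≥ ⋯ ≥ l N (≥ 0)`. -/
def IsPartition {N : ℕ} (l : Fin N → ℕ) : Prop :=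
  ∀ i j : Fin N, i ≤ j → l j ≤ l i

/-- Containment of diagrams: `μ ⊂ l`. -/
def SubDiag {N : ℕ} (μ l : Fin N → ℕ) : Prop := ∀ j, μ j ≤ l j

/-- The weight `|l| = l 1 + ⋯ + l N`. -/
def wt {N : ℕ} (l : Fin N → ℕ) : ℕ := ∑ j, l j

/-- The skew diagram `l/μ` is a vertical strip: `μ j ≤ l j ≤ μ j + 1` for all `j`. -/
def VStrip {N : ℕ} (l μ : Fin N → ℕ) : Prop :=
  ∀ j, μ j ≤ l j ∧ l j ≤ μ j + 1

/-- The skew diagram `l/μ` is a horizontal strip: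
`l 1 ≥ μ 1 ≥ l 2 ≥ μ 2 ≥ ⋯ ≥ l N ≥ μ N` (interlacing). -/
def HStrip {N : ℕ} (l μ : Fin N → ℕ) : Prop :=
  (∀ j, μ j ≤ l j) ∧ ∀ (j : ℕ) (h : j + 1 < N), l ⟨j + 1, h⟩ ≤ μ ⟨j, by omega⟩

/-- `|l/μ| = |l| - |μ|` (for `μ ⊂ l`). -/
def skewWt {N : ℕ} (l μ : Fin N → ℕ) : ℕ := ∑ j, (l j - μ j)

/-- The proximity relation `μ ∼_r l`: there is a partition `ν ⊂ l, ν ⊂ μ` such that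
`l/ν` and `μ/ν` are vertical strips with `|l/ν| + |μ/ν| ≤ r`. -/
def simRel {N : ℕ} (r : ℕ) (μ l : Fin N → ℕ) : Prop :=
  ∃ ν : Fin N → ℕ, IsPartition ν ∧ SubDiag ν l ∧ SubDiag ν μ ∧
    VStrip l ν ∧ VStrip μ ν ∧ skewWt l ν + skewWt μ ν ≤ r

/-- `μ ⪯ l`: there is a partition `ν` with `μ ⊂ ν ⊂ l` such that `l/ν` and `ν/μ`
are horizontal strips. -/
def preceq {N : ℕ} (μ l : Fin N → ℕ) : Prop :=
  ∃ ν : Fin N → ℕ, IsPartition ν ∧ SubDiag μ ν ∧ SubDiag ν l ∧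
    HStrip l ν ∧ HStrip ν μ

/-- The conjugate partition `l′ ∈ Λ_m` (for `l ∈ Λ_N` with `l 1 ≤ m`):
`l′ i = #{j : l j ≥ i}` (here `i : Fin m` is 0-based, so `i+1`-th row). -/
def conjP {N : ℕ} (m : ℕ) (l : Fin N → ℕ) : Fin m → ℕ :=
  fun i => (Finset.univ.filter (fun j : Fin N => (i : ℕ) + 1 ≤ l j)).card

/-- The rectangular partition `m^N ∈ Λ_N`. -/
def rectP (m N : ℕ) : Fin N → ℕ := fun _ => m

/-- The complement `m^N − l` of `l ⊂ m^N` in `Λ_N`: `(m^N − l) j = m − l (N+1−j)`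
(1-based), i.e. `m - l j.rev` (0-based). -/
def complP {N : ℕ} (m : ℕ) (l : Fin N → ℕ) : Fin N → ℕ :=
  fun j => m - l j.rev

/-- The natural embedding `Λ_N ↪ Λ_{N+1}` by appending a zero part. -/
def extendP {N : ℕ} (l : Fin N → ℕ) : Fin (N + 1) → ℕ := Fin.snoc l 0

/-!
Two partitions `A, B` satisfy `A ∼_r B` exactly when they differ by at most one in every
part and in at most `r` parts: any common vertical-strip base `ν` pays at least one box for
each part where `A` and `B` differ, and `A ⊓ B` pays exactly one. For the complements of
conjugates, the parts of `n^m − μ′` and `(n+1)^m − λ′` agree exactly at the (reversed)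
indices `j` with `λ′_j = μ′_j + 1`, so the number of differing parts is `m − d`.
-/

section Conjugate

variable {N : ℕ} (m : ℕ) (l : Fin N → ℕ)

lemma conjP_le (i : Fin m) : conjP m l i ≤ N := by
  simpa [conjP] using card_filter_le univ (fun j : Fin N => (i : ℕ) + 1 ≤ l j)

lemma isPartition_conjP : IsPartition (conjP m l) := by
  intro i i' h
  apply card_le_card
  intro j
  simp only [mem_filter_univ]
  have : (i : ℕ) ≤ i' := h
  omega

end Conjugate

lemma isPartition_complP {N : ℕ} {l : Fin N → ℕ} (hl : IsPartition l) (k : ℕ) :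
    IsPartition (complP k l) := by
  intro i j hij
  have := hl _ _ (Fin.rev_le_rev.mpr hij)
  unfold complP
  omega

section Proximity

variable {N : ℕ} {A B ν : Fin N → ℕ}

lemma card_filter_ne_le_skewWt_add (hA : VStrip A ν) (hB : VStrip B ν) :
    #{j | A j ≠ B j} ≤ skewWt A ν + skewWt B ν := by
  rw [card_filter, skewWt, skewWt, ← sum_add_distrib]
  refine sum_le_sum fun j _ => ?_
  have := hA j
  have := hB j
  split_ifs <;> omega

lemma skewWt_inf_add (hAB : ∀ j, A j ≤ B j + 1 ∧ B j ≤ A j + 1) :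
    skewWt A (A ⊓ B) + skewWt B (A ⊓ B) = #{j | A j ≠ B j} := by
  rw [card_filter, skewWt, skewWt, ← sum_add_distrib]
  refine sum_congr rfl fun j _ => ?_
  have := hAB j
  simp only [Pi.inf_apply]
  split_ifs <;> omega

lemma simRel_iff (hA : IsPartition A) (hB : IsPartition B) (r : ℕ) :
    simRel r A B ↔ (∀ j, A j ≤ B j + 1 ∧ B j ≤ A j + 1) ∧ #{j | A j ≠ B j} ≤ r := by
  constructor
  · rintro ⟨ν, -, -, -, hBν, hAν, hwt⟩
    refine ⟨fun j => ?_, ?_⟩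
    · have := hAν j
      have := hBν j
      omega
    · have := card_filter_ne_le_skewWt_add hAν hBν
      omega
  · rintro ⟨hAB, hcard⟩
    refine ⟨A ⊓ B, fun i j hij => inf_le_inf (hA i j hij) (hB i j hij),
      fun j => inf_le_right, fun j => inf_le_left, fun j => ?_, fun j => ?_, ?_⟩
    · have := hAB j
      simp only [Pi.inf_apply]
      omega
    · have := hAB j
      simp only [Pi.inf_apply]
      omega
    · rw [add_comm, skewWt_inf_add hAB]
      exact hcard

end Proximity

lemma card_filter_complP_conjP_eq {m n : ℕ} (lam : Fin (n + 1) → ℕ) (mu : Fin n → ℕ) :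
    #{j | complP n (conjP m mu) j = complP (n + 1) (conjP m lam) j} =
      #{j | conjP m lam j = conjP m mu j + 1} := by
  refine card_equiv Fin.revPerm fun j => ?_
  have := conjP_le m mu j.rev
  have := conjP_le m lam j.rev
  rw [mem_filter_univ, mem_filter_univ, Fin.revPerm_apply]
  unfold complP
  omega

theorem statement2_general (m n : ℕ) (lam : Fin (n + 1) → ℕ) (mu : Fin n → ℕ) (r : ℕ) :
    simRel r (complP n (conjP m mu)) (complP (n + 1) (conjP m lam)) ↔
      (simRel m (complP n (conjP m mu)) (complP (n + 1) (conjP m lam)) ∧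
        m - (Finset.univ.filter
          (fun j : Fin m => conjP m lam j = conjP m mu j + 1)).card ≤ r) := by
  have hA := isPartition_complP (isPartition_conjP m mu) n
  have hB := isPartition_complP (isPartition_conjP m lam) (n + 1)
  have hcard_ne :
      #{j | complP n (conjP m mu) j ≠ complP (n + 1) (conjP m lam) j} =
        m - #{j | conjP m lam j = conjP m mu j + 1} := by
    rw [← card_filter_complP_conjP_eq, filter_not, card_sdiff_of_subset (filter_subset _ _),
      card_univ, Fintype.card_fin]
  rw [simRel_iff hA hB, simRel_iff hA hB, hcard_ne]
  constructor
  · rintro ⟨hAB, hr⟩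
    exact ⟨⟨hAB, Nat.sub_le _ _⟩, hr⟩
  · rintro ⟨⟨hAB, -⟩, hr⟩
    exact ⟨hAB, hr⟩

/-- For `λ ∈ Λ_{n+1}` with `λ ⊂ m^{n+1}`, `μ ∈ Λ_n` with `μ ⊂ m^n`, and
`0 ≤ r ≤ m`, with `d = #{1 ≤ j ≤ m : λ′_j = μ′_j + 1}`, one has
`(n^m − μ′) ∼_r ((n+1)^m − λ′)` iff `(n^m − μ′) ∼_m ((n+1)^m − λ′)` and `r ≥ m − d`. -/
theorem statement2 (m n : ℕ) (lam : Fin (n + 1) → ℕ) (hlam : IsPartition lam)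
    (hlamb : SubDiag lam (rectP m (n + 1)))
    (mu : Fin n → ℕ) (hmu : IsPartition mu) (hmub : SubDiag mu (rectP m n))
    (r : ℕ) (hr : r ≤ m) :
    simRel r (complP n (conjP m mu)) (complP (n + 1) (conjP m lam)) ↔
      (simRel m (complP n (conjP m mu)) (complP (n + 1) (conjP m lam)) ∧
        m - (Finset.univ.filter
          (fun j : Fin m => conjP m lam j = conjP m mu j + 1)).card ≤ r) :=
  statement2_general m n lam mu r
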